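/- Let f satisfy Assumption 1 and let u^1, u^2 be two families of approximation functions each satisfying Assumption 2, with u_i^1(y_i;x) ≤ u_i^2(y_i;x) for all y_i ∈ ℝ^{n_i}, x ∈ ℝⁿ, i ∈ [N]. Then 𝒳* ⊆ 𝓛_{u^1} ⊆ 𝓛_{u^2} ⊆ 𝒯_f, where 𝒳* is the set of global minimizers of F. -/

import Mathlib

/-!
The first two inclusions are immediate: `uᵢ(·;x)` majorizes `f` along block `i` (drop the
`μᵢ`-term of the lower bound), and `u¹ ≤ u²`. For the last one, fix `j ∈ I(z)` in block `i` and
move only the coordinate `j` of `yᵢ = zᵢ + s eⱼ`. For small `s` this leaves `‖·‖_{0,λ}` unchanged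
(either `zⱼ ≠ 0` stays nonzero, or `λᵢ = 0`), so `s ↦ uᵢ(zᵢ + s eⱼ; z)` has a local minimum
`f(z)` at `s = 0`, and its derivative there is `∇ⱼ f(z)`.
-/

open scoped RealInnerProductSpace
open Finset

/-- The weighted ℓ₀ quasinorm `‖x‖_{0,λ}`. -/
noncomputable def l0norm {n N : ℕ} (blk : Fin n → Fin N) (lam : Fin N → ℝ)
    (x : EuclideanSpace ℝ (Fin n)) : ℝ :=
  ∑ j, if x j ≠ 0 then lam (blk j) else 0

/-- Membership in `I(x) = supp(x) ∪ {j ∈ 𝒮ᵢ : λᵢ = 0}`. -/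
def InIset {n N : ℕ} (blk : Fin n → Fin N) (lam : Fin N → ℝ)
    (x : EuclideanSpace ℝ (Fin n)) (j : Fin n) : Prop :=
  x j ≠ 0 ∨ lam (blk j) = 0

/-- Block restriction `xᵢ = Uᵢᵀ x`. -/
noncomputable def blkProj {n N : ℕ} (blk : Fin n → Fin N) (i : Fin N)
    (x : EuclideanSpace ℝ (Fin n)) : EuclideanSpace ℝ {j : Fin n // blk j = i} :=
  WithLp.toLp 2 (fun j => x j.1)

/-- Block embedding `Uᵢ hᵢ`. -/
noncomputable def blkEmbed {n N : ℕ} (blk : Fin n → Fin N) (i : Fin N)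
    (v : EuclideanSpace ℝ {j : Fin n // blk j = i}) : EuclideanSpace ℝ (Fin n) :=
  WithLp.toLp 2 (fun j => if h : blk j = i then v ⟨j, h⟩ else 0)

/-- Assumption 2 on the family of approximation functions `uᵢ(·;·)`, with gradients
(in the first argument) `guᵢ`, Lipschitz constants `Mᵢ > Lᵢ` and curvature constants
`μᵢ ∈ (0, Mᵢ - Lᵢ]`. -/
structure ApproxAssumption {n N : ℕ} (blk : Fin n → Fin N)
    (f : EuclideanSpace ℝ (Fin n) → ℝ)
    (g : EuclideanSpace ℝ (Fin n) → EuclideanSpace ℝ (Fin n))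
    (L : Fin N → ℝ)
    (u : ∀ i : Fin N, EuclideanSpace ℝ {j : Fin n // blk j = i} →
      EuclideanSpace ℝ (Fin n) → ℝ)
    (gu : ∀ i : Fin N, EuclideanSpace ℝ {j : Fin n // blk j = i} →
      EuclideanSpace ℝ (Fin n) → EuclideanSpace ℝ {j : Fin n // blk j = i})
    (M μ : Fin N → ℝ) : Prop where
  strictConvexOn : ∀ i x, StrictConvexOn ℝ Set.univ (fun v => u i v x)
  hasGradient : ∀ i x v, HasGradientAt (fun w => u i w x) (gu i v x) v
  continuous_second : ∀ i v, Continuous fun x => u i v x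
  value_at : ∀ i x, u i (blkProj blk i x) x = f x
  gradient_at : ∀ i x, gu i (blkProj blk i x) x = blkProj blk i (g x)
  lipschitz_grad : ∀ i x v w, ‖gu i v x - gu i w x‖ ≤ M i * ‖v - w‖
  M_gt_L : ∀ i, L i < M i
  mu_pos : ∀ i, 0 < μ i
  mu_le : ∀ i, μ i ≤ M i - L i
  lower_bound : ∀ i x v,
    f (x + blkEmbed blk i (v - blkProj blk i x)) + μ i / 2 * ‖v - blkProj blk i x‖ ^ 2
      ≤ u i v x

/-- `z` is a `u`-strong local minimizer: `F(z) ≤ min_{yᵢ} uᵢ(yᵢ;z) + ‖z + Uᵢ(yᵢ - zᵢ)‖_{0,λ}`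
for all blocks `i`. -/
def IsUStrongLocalMin {n N : ℕ} (blk : Fin n → Fin N) (lam : Fin N → ℝ)
    (f : EuclideanSpace ℝ (Fin n) → ℝ)
    (u : ∀ i : Fin N, EuclideanSpace ℝ {j : Fin n // blk j = i} →
      EuclideanSpace ℝ (Fin n) → ℝ)
    (z : EuclideanSpace ℝ (Fin n)) : Prop :=
  ∀ (i : Fin N) (y : EuclideanSpace ℝ {j : Fin n // blk j = i}),
    f z + l0norm blk lam z ≤
      u i y z + l0norm blk lam (z + blkEmbed blk i (y - blkProj blk i z))

open Filter Topology

section BlockCoordinates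

variable {n N : ℕ} (blk : Fin n → Fin N)

theorem blkEmbed_single {i : Fin N} {j : Fin n} (h : blk j = i) (a : ℝ) :
    blkEmbed blk i (EuclideanSpace.single ⟨j, h⟩ a) = EuclideanSpace.single j a := by
  ext k
  by_cases hk : k = j
  · subst hk; simp [blkEmbed, h]
  · simp [blkEmbed, hk]

theorem inner_blkProj_single (x : EuclideanSpace ℝ (Fin n)) {i : Fin N} {j : Fin n}
    (h : blk j = i) : ⟪blkProj blk i x, EuclideanSpace.single ⟨j, h⟩ 1⟫ = x j := by
  simp [blkProj, EuclideanSpace.inner_single_right]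

variable (lam : Fin N → ℝ) {z : EuclideanSpace ℝ (Fin n)} {j : Fin n}

theorem l0norm_add_single {s : ℝ} (hs : lam (blk j) = 0 ∨ (z j ≠ 0 ↔ z j + s ≠ 0)) :
    l0norm blk lam (z + EuclideanSpace.single j s) = l0norm blk lam z := by
  refine Finset.sum_congr rfl fun k _ => ?_
  by_cases hk : k = j
  · subst hk
    rcases hs with hlam | hiff
    · simp [hlam]
    · simp [hiff]
  · simp [hk]

theorem InIset.eventually_l0norm_add_single (hj : InIset blk lam z j) :
    ∀ᶠ s in 𝓝 (0 : ℝ),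
      l0norm blk lam (z + EuclideanSpace.single j s) = l0norm blk lam z := by
  rcases hj with hz | hlam
  · have : ∀ᶠ s in 𝓝 (0 : ℝ), z j + s ≠ 0 :=
      (continuous_const.add continuous_id).continuousAt.eventually_ne (by simpa using hz)
    filter_upwards [this] with s hs using l0norm_add_single blk lam (Or.inr (by simp [hz, hs]))
  · exact .of_forall fun s => l0norm_add_single blk lam (Or.inl hlam)

end BlockCoordinates

theorem inner_eq_zero_of_isLocalMin_line {E : Type*} [NormedAddCommGroup E]
    [InnerProductSpace ℝ E] [CompleteSpace E] {h : E → ℝ} {v w e : E}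
    (hh : HasGradientAt h w v) (hmin : IsLocalMin (fun s : ℝ => h (v + s • e)) 0) :
    ⟪w, e⟫ = 0 := by
  have hline : HasDerivAt (fun s : ℝ => v + s • e) e 0 := by
    simpa using ((hasDerivAt_id (0 : ℝ)).smul_const e).const_add v
  have hh' : HasFDerivAt h (InnerProductSpace.toDual ℝ E w) (v + (0 : ℝ) • e) := by
    simpa using hh.hasFDerivAt
  simpa using hmin.hasDerivAt_eq_zero (hh'.comp_hasDerivAt 0 hline)

section StrongLocalMin

variable {n N : ℕ} {blk : Fin n → Fin N} {lam : Fin N → ℝ} {f : EuclideanSpace ℝ (Fin n) → ℝ}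
  {u u' : ∀ i : Fin N, EuclideanSpace ℝ {j : Fin n // blk j = i} →
    EuclideanSpace ℝ (Fin n) → ℝ} {z : EuclideanSpace ℝ (Fin n)}

theorem ApproxAssumption.le_apply {g : EuclideanSpace ℝ (Fin n) → EuclideanSpace ℝ (Fin n)}
    {L M μ : Fin N → ℝ} {gu : ∀ i : Fin N, EuclideanSpace ℝ {j : Fin n // blk j = i} →
      EuclideanSpace ℝ (Fin n) → EuclideanSpace ℝ {j : Fin n // blk j = i}}
    (hu : ApproxAssumption blk f g L u gu M μ) (i : Fin N) (x : EuclideanSpace ℝ (Fin n))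
    (v : EuclideanSpace ℝ {j : Fin n // blk j = i}) :
    f (x + blkEmbed blk i (v - blkProj blk i x)) ≤ u i v x := by
  have hlb := hu.lower_bound i x v
  have hμ := (hu.mu_pos i).le
  nlinarith [sq_nonneg ‖v - blkProj blk i x‖]

theorem isUStrongLocalMin_of_forall_le
    (hu : ∀ i x v, f (x + blkEmbed blk i (v - blkProj blk i x)) ≤ u i v x)
    (hz : ∀ x, f z + l0norm blk lam z ≤ f x + l0norm blk lam x) :
    IsUStrongLocalMin blk lam f u z := fun i v => by
  linarith [hz (z + blkEmbed blk i (v - blkProj blk i z)), hu i z v]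

theorem IsUStrongLocalMin.mono (hz : IsUStrongLocalMin blk lam f u z)
    (huu' : ∀ i v x, u i v x ≤ u' i v x) : IsUStrongLocalMin blk lam f u' z := fun i v =>
  (hz i v).trans (add_le_add_left (huu' i v z) _)

theorem IsUStrongLocalMin.apply_eq_zero_of_inIset (hz : IsUStrongLocalMin blk lam f u z)
    {d : EuclideanSpace ℝ (Fin n)} {j : Fin n}
    (hval : u (blk j) (blkProj blk (blk j) z) z = f z)
    (hgrad : HasGradientAt (fun w => u (blk j) w z) (blkProj blk (blk j) d)
      (blkProj blk (blk j) z))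
    (hj : InIset blk lam z j) : d j = 0 := by
  set v := blkProj blk (blk j) z
  set e : EuclideanSpace ℝ {k // blk k = blk j} := EuclideanSpace.single ⟨j, rfl⟩ 1
  have hmin : IsLocalMin (fun s : ℝ => u (blk j) (v + s • e) z) 0 := by
    filter_upwards [hj.eventually_l0norm_add_single] with s hs
    have hse : s • e = EuclideanSpace.single ⟨j, rfl⟩ s := by ext; simp [e]
    have := hz (blk j) (v + s • e)
    rw [add_sub_cancel_left, hse, blkEmbed_single, hs] at this
    simpa [hval, hse] using this
  rw [← inner_blkProj_single blk d rfl]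
  exact inner_eq_zero_of_isLocalMin_line hgrad hmin

end StrongLocalMin

theorem statement6_general {n N : ℕ} (blk : Fin n → Fin N) (lam : Fin N → ℝ)
    (f : EuclideanSpace ℝ (Fin n) → ℝ)
    (g : EuclideanSpace ℝ (Fin n) → EuclideanSpace ℝ (Fin n))
    (L : Fin N → ℝ)
    (u₁ u₂ : ∀ i : Fin N, EuclideanSpace ℝ {j : Fin n // blk j = i} →
      EuclideanSpace ℝ (Fin n) → ℝ)
    (gu₁ gu₂ : ∀ i : Fin N, EuclideanSpace ℝ {j : Fin n // blk j = i} →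
      EuclideanSpace ℝ (Fin n) → EuclideanSpace ℝ {j : Fin n // blk j = i})
    (M₁ μ₁ M₂ μ₂ : Fin N → ℝ)
    (hu₁ : ApproxAssumption blk f g L u₁ gu₁ M₁ μ₁)
    (hu₂ : ApproxAssumption blk f g L u₂ gu₂ M₂ μ₂)
    (h12 : ∀ (i : Fin N) (y : EuclideanSpace ℝ {j : Fin n // blk j = i})
      (x : EuclideanSpace ℝ (Fin n)), u₁ i y x ≤ u₂ i y x) :
    (∀ z : EuclideanSpace ℝ (Fin n),
        (∀ x, f z + l0norm blk lam z ≤ f x + l0norm blk lam x) →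
        IsUStrongLocalMin blk lam f u₁ z) ∧
    (∀ z : EuclideanSpace ℝ (Fin n),
        IsUStrongLocalMin blk lam f u₁ z → IsUStrongLocalMin blk lam f u₂ z) ∧
    (∀ z : EuclideanSpace ℝ (Fin n),
        IsUStrongLocalMin blk lam f u₂ z → ∀ j, InIset blk lam z j → g z j = 0) := by
  refine ⟨fun z hz => isUStrongLocalMin_of_forall_le hu₁.le_apply hz,
    fun z hz => hz.mono h12, fun z hz j hj => ?_⟩
  have hgrad := hu₂.hasGradient (blk j) z (blkProj blk (blk j) z)
  rw [hu₂.gradient_at] at hgrad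
  exact hz.apply_eq_zero_of_inIset (hu₂.value_at (blk j) z) hgrad hj

/-- If `u¹, u²` are two families of approximation functions satisfying
Assumption 2 with `u¹ᵢ(yᵢ;x) ≤ u²ᵢ(yᵢ;x)` everywhere, then
`𝒳* ⊆ 𝓛_{u¹} ⊆ 𝓛_{u²} ⊆ 𝒯_f`. -/
theorem statement6 {n N : ℕ} (blk : Fin n → Fin N) (lam : Fin N → ℝ)
    (hlam : ∀ i, 0 ≤ lam i) (hlam_pos : ∃ i, 0 < lam i)
    (f : EuclideanSpace ℝ (Fin n) → ℝ)
    (g : EuclideanSpace ℝ (Fin n) → EuclideanSpace ℝ (Fin n))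
    (hconv : ConvexOn ℝ Set.univ f)
    (hgrad : ∀ x, HasGradientAt f (g x) x)
    (L : Fin N → ℝ) (hL : ∀ i, 0 < L i)
    (hLip : ∀ (i : Fin N) (x : EuclideanSpace ℝ (Fin n))
      (h : EuclideanSpace ℝ {j : Fin n // blk j = i}),
      ‖blkProj blk i (g (x + blkEmbed blk i h)) - blkProj blk i (g x)‖ ≤ L i * ‖h‖)
    (u₁ u₂ : ∀ i : Fin N, EuclideanSpace ℝ {j : Fin n // blk j = i} →
      EuclideanSpace ℝ (Fin n) → ℝ)
    (gu₁ gu₂ : ∀ i : Fin N, EuclideanSpace ℝ {j : Fin n // blk j = i} →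
      EuclideanSpace ℝ (Fin n) → EuclideanSpace ℝ {j : Fin n // blk j = i})
    (M₁ μ₁ M₂ μ₂ : Fin N → ℝ)
    (hu₁ : ApproxAssumption blk f g L u₁ gu₁ M₁ μ₁)
    (hu₂ : ApproxAssumption blk f g L u₂ gu₂ M₂ μ₂)
    (h12 : ∀ (i : Fin N) (y : EuclideanSpace ℝ {j : Fin n // blk j = i})
      (x : EuclideanSpace ℝ (Fin n)), u₁ i y x ≤ u₂ i y x) :
    (∀ z : EuclideanSpace ℝ (Fin n),
        (∀ x, f z + l0norm blk lam z ≤ f x + l0norm blk lam x) →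
        IsUStrongLocalMin blk lam f u₁ z) ∧
    (∀ z : EuclideanSpace ℝ (Fin n),
        IsUStrongLocalMin blk lam f u₁ z → IsUStrongLocalMin blk lam f u₂ z) ∧
    (∀ z : EuclideanSpace ℝ (Fin n),
        IsUStrongLocalMin blk lam f u₂ z → ∀ j, InIset blk lam z j → g z j = 0) :=
  statement6_general blk lam f g L u₁ u₂ gu₁ gu₂ M₁ μ₁ M₂ μ₂ hu₁ hu₂ h12
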